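/- For every real number M there exists a 2-edge-coloured graph G = (Γ, R, B) with R ≠ ∅ and B ≠ ∅ and a complex number z with nonzero imaginary part such that |z| > M and P(z) = 0, where P is the chromatic polynomial of G evaluated over the complex numbers. In other words, non-real roots of chromatic polynomials of bichromatic 2-edge-coloured graphs can have arbitrarily large modulus. -/

import Mathlib

open SimpleGraph Polynomial

/-- A `k`-colouring of a mixed 2-edge-coloured graph with red edge graph `R`,
blue edge graph `B`, and extra uncoloured edge graph `F`. -/
def IsMixedColouring {V : Type*} (R B F : SimpleGraph V) {k : ℕ} (c : V → Fin k) : Prop :=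
  (∀ u v, (R ⊔ B ⊔ F).Adj u v → c u ≠ c v) ∧
  (∀ u x v y, R.Adj u x → B.Adj v y → c u = c v → c x ≠ c y)

/-- The number of `k`-colourings of the mixed 2-edge-coloured graph `(R, B, F)`. -/
noncomputable def numColourings {V : Type*} (R B F : SimpleGraph V) (k : ℕ) : ℕ :=
  Nat.card {c : V → Fin k // IsMixedColouring R B F c}

/-- A bichromatic 2-path `(x, u, y)`: `xu` red, `uy` blue, `xy` not an edge of `S(M)`. -/
def IsBiPath {V : Type*} (R B F : SimpleGraph V) (x u y : V) : Prop :=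
  R.Adj x u ∧ B.Adj u y ∧ ¬(R ⊔ B ⊔ F).Adj x y

/-- The number of bichromatic 2-paths. -/
noncomputable def numBiPaths {V : Type*} (R B F : SimpleGraph V) : ℕ :=
  Nat.card {p : V × V × V // IsBiPath R B F p.1 p.2.1 p.2.2}

/-- The graph `Λ(M)`: all edges of `S(M)` plus edges joining the ends of
bichromatic 2-paths. -/
def LambdaGraph {V : Type*} (R B F : SimpleGraph V) : SimpleGraph V where
  Adj a b := a ≠ b ∧ ((R ⊔ B ⊔ F).Adj a b ∨
    ∃ w, IsBiPath R B F a w b ∨ IsBiPath R B F b w a)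
  symm := by
    refine ⟨?_⟩
    rintro a b ⟨hab, h⟩
    refine ⟨hab.symm, ?_⟩
    rcases h with h | ⟨w, h⟩
    · exact Or.inl h.symm
    · exact Or.inr ⟨w, h.symm⟩
  loopless := ⟨fun a h => h.1 rfl⟩

/-- `(p.1, p.2)` is a pair of obstructing edges: `p.1` a red edge `ux`, `p.2` a blue edge
`vy`, with the subgraph of `Λ` induced on `{u, x, v, y}` of chromatic number 2. -/
def IsObstructingPair {V : Type*} (R B F : SimpleGraph V) (p : Sym2 V × Sym2 V) : Prop :=
  ∃ u x v y : V, p.1 = s(u, x) ∧ p.2 = s(v, y) ∧ R.Adj u x ∧ B.Adj v y ∧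
    (SimpleGraph.induce {u, x, v, y} (LambdaGraph R B F)).chromaticNumber = 2

/-- The number of pairs of obstructing edges. -/
noncomputable def numObstructing {V : Type*} (R B F : SimpleGraph V) : ℕ :=
  Nat.card {p : Sym2 V × Sym2 V // IsObstructingPair R B F p}

/-- The number of 3-element vertex subsets inducing a triangle. -/
noncomputable def numTriangles {V : Type*} (G : SimpleGraph V) : ℕ :=
  Nat.card {s : Finset V // s.card = 3 ∧ ∀ a ∈ s, ∀ b ∈ s, a ≠ b → G.Adj a b}

/-- A 2-edge-coloured graph is chromatically invariant when for each `k` its number of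
`k`-colourings equals the number of proper `k`-colourings of the underlying graph. -/
def ChromaticallyInvariant {V : Type*} (R B : SimpleGraph V) : Prop :=
  ∀ k : ℕ, Nat.card {c : V → Fin k // IsMixedColouring R B ⊥ c} =
    Nat.card {c : V → Fin k // ∀ u v, (R ⊔ B).Adj u v → c u ≠ c v}

/-- A graph is a join when its vertex set has a partition into two non-empty parts with
every vertex of one part adjacent to every vertex of the other. -/
def IsJoin {W : Type*} (G : SimpleGraph W) : Prop :=
  ∃ X Y : Set W, X.Nonempty ∧ Y.Nonempty ∧ Disjoint X Y ∧ X ∪ Y = Set.univ ∧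
    ∀ x ∈ X, ∀ y ∈ Y, G.Adj x y

/-- Disjoint union of two simple graphs. -/
def disjUnion {α β : Type*} (G : SimpleGraph α) (H : SimpleGraph β) :
    SimpleGraph (α ⊕ β) where
  Adj a b := match a, b with
    | Sum.inl a, Sum.inl b => G.Adj a b
    | Sum.inr a, Sum.inr b => H.Adj a b
    | _, _ => False
  symm := ⟨by rintro (a | a) (b | b) h <;> simp_all <;> exact h.symm⟩
  loopless := ⟨by rintro (a | a) h <;> exact (SimpleGraph.irrefl _) h⟩

/-- The complete bipartite "cross" graph between the two sides of a sum type. -/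
def crossGraph (α β : Type*) : SimpleGraph (α ⊕ β) where
  Adj a b := match a, b with
    | Sum.inl _, Sum.inr _ => True
    | Sum.inr _, Sum.inl _ => True
    | _, _ => False
  symm := ⟨by rintro (a | a) (b | b) h <;> trivial⟩
  loopless := ⟨by rintro (a | a) h <;> exact h⟩

/-!
Take a red clique `K_a` and, on disjoint vertices, a blue star `K_{1,3}`. A colouring is injective
on the clique, and if the centre of the star reuses a clique colour then the leaves must avoid
every clique colour; hence, with `k^(a)` the falling factorial, the chromatic polynomial is
`k^(a) (a (k - a)^3 + (k - a) (k - 1)^3) = k^(a) (k - a) ((k - 1)^3 + a (k - a)^2)`.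
The cubic `(x - 1)^3 + a (x - a)^2` is positive for real `x ≥ 2 - 2a`, while its three roots sum
to `3 - a`; so it has a pair of conjugate nonreal roots, whose real part exceeds `(a + 1) / 2`.
-/

open Function ComplexConjugate

theorem Multiset.exists_eq_insert_insert_singleton_of_card_eq_three {α : Type*}
    {s : Multiset α} {x y : α} (hs : Multiset.card s = 3) (hx : x ∈ s) (hy : y ∈ s)
    (hxy : x ≠ y) : ∃ w, s = {x, y, w} := by
  obtain ⟨t, rfl⟩ := Multiset.exists_cons_of_mem hx
  obtain ⟨u, rfl⟩ := Multiset.exists_cons_of_mem ((Multiset.mem_cons.mp hy).resolve_left hxy.symm)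
  obtain ⟨w, rfl⟩ := Multiset.card_eq_one.mp (by simpa using hs)
  exact ⟨w, rfl⟩

namespace Cubic

lemma mem_roots_map_ofReal_iff {P : Cubic ℝ} (ha : P.a ≠ 0) (z : ℂ) :
    z ∈ (P.map Complex.ofRealHom).roots ↔ P.a * z ^ 3 + P.b * z ^ 2 + P.c * z + P.d = 0 := by
  rw [mem_roots_iff (ne_zero_of_a_ne_zero (by simpa [Cubic.map] using ha))]
  rfl

lemma conj_mem_roots_map_ofReal {P : Cubic ℝ} (ha : P.a ≠ 0) {z : ℂ}
    (hz : z ∈ (P.map Complex.ofRealHom).roots) : conj z ∈ (P.map Complex.ofRealHom).roots := by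
  rw [mem_roots_map_ofReal_iff ha] at hz ⊢
  simpa using congrArg conj hz

lemma re_mem_roots_of_im_eq_zero {P : Cubic ℝ} (ha : P.a ≠ 0) {z : ℂ}
    (hz : z ∈ (P.map Complex.ofRealHom).roots) (him : z.im = 0) : z.re ∈ P.roots := by
  rw [mem_roots_iff (ne_zero_of_a_ne_zero ha)]
  have hz_real : z = z.re := Complex.ext rfl (by simp [him])
  rw [mem_roots_map_ofReal_iff ha, hz_real] at hz
  exact_mod_cast hz

theorem exists_nonreal_root_of_roots_lt {P : Cubic ℝ} (ha : P.a = 1) {t : ℝ}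
    (hroots : ∀ x ∈ P.roots, x < t) (ht : 3 * t ≤ -P.b) :
    ∃ z ∈ (P.map Complex.ofRealHom).roots, z.im ≠ 0 ∧ -P.b - t < 2 * z.re := by
  have ha0 : P.a ≠ 0 := by simp [ha]
  have hcard : Multiset.card (P.map Complex.ofRealHom).roots = 3 :=
    (splits_iff_card_roots ha0).mp (IsAlgClosed.splits _)
  have hre_lt : ∀ z ∈ (P.map Complex.ofRealHom).roots, z.im = 0 → z.re < t :=
    fun z hz him => hroots _ (re_mem_roots_of_im_eq_zero ha0 hz him)
  have vieta : ∀ {x y w : ℂ}, (P.map Complex.ofRealHom).roots = {x, y, w} →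
      (P.b : ℂ) = -(x + y + w) := fun h => by simpa [ha] using b_eq_three_roots ha0 h
  obtain ⟨z, hz, hzim⟩ : ∃ z ∈ (P.map Complex.ofRealHom).roots, z.im ≠ 0 := by
    by_contra! hreal
    obtain ⟨x, y, w, hxyw⟩ := Multiset.card_eq_three.mp hcard
    have hb := congrArg Complex.re (vieta hxyw)
    simp only [hxyw, Multiset.insert_eq_cons, Multiset.mem_cons, Multiset.mem_singleton,
      forall_eq_or_imp, forall_eq] at hre_lt hreal
    simp only [Complex.ofReal_re, Complex.neg_re, Complex.add_re] at hb
    linarith [hre_lt.1 hreal.1, hre_lt.2.1 hreal.2.1, hre_lt.2.2 hreal.2.2]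
  have hconj_ne : conj z ≠ z := fun h => hzim (Complex.conj_eq_iff_im.mp h)
  obtain ⟨w, hroots⟩ := Multiset.exists_eq_insert_insert_singleton_of_card_eq_three hcard hz
    (conj_mem_roots_map_ofReal ha0 hz) hconj_ne.symm
  have hw : w.im = 0 := by simpa using congrArg Complex.im (vieta hroots)
  have hb : P.b = -(2 * z.re + w.re) := by
    simpa [two_mul] using congrArg Complex.re (vieta hroots)
  have hwt := hre_lt w (by simp [hroots]) hw
  exact ⟨z, hz, hzim, by linarith⟩

end Cubic

theorem exists_nonreal_root_re_gt (a : ℝ) (ha : 1 < a) :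
    ∃ z : ℂ, (z - 1) ^ 3 + a * (z - a) ^ 2 = 0 ∧ z.im ≠ 0 ∧ a + 1 < 2 * z.re := by
  let P : Cubic ℝ := ⟨1, a - 3, 3 - 2 * a ^ 2, a ^ 3 - 1⟩
  have hroots : ∀ x ∈ P.roots, x < 2 - 2 * a := by
    intro x hx
    rw [Cubic.mem_roots_iff (Cubic.ne_zero_of_a_ne_zero one_ne_zero)] at hx
    by_contra! hxa
    have hpos : 0 < (x - 1) ^ 3 + a * (x - a) ^ 2 := by
      rcases le_or_gt x 1 with hx1 | hx1
      · nlinarith [sq_nonneg (1 - x), mul_nonneg (sub_nonneg.2 hx1) (sub_nonneg.2 hxa)]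
      · positivity
    exact hpos.ne' (by linear_combination hx)
  obtain ⟨z, hz, hzim, hzre⟩ :=
    Cubic.exists_nonreal_root_of_roots_lt (P := P) rfl hroots (by simp only [P]; linarith)
  rw [Cubic.mem_roots_map_ofReal_iff one_ne_zero] at hz
  refine ⟨z, ?_, hzim, by simp only [P] at hzre; linarith⟩
  simp only [P] at hz
  push_cast at hz
  linear_combination hz

section Relabel

variable {V W : Type*}

lemma SimpleGraph.disjoint_comap {f : V → W} {G H : SimpleGraph W} (h : Disjoint G H) :
    Disjoint (G.comap f) (H.comap f) :=
  disjoint_left.2 fun _ _ hG hH => disjoint_left.1 h _ _ hG hH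

lemma SimpleGraph.comap_ne_bot {f : V → W} (hf : Surjective f) {G : SimpleGraph W} (h : G ≠ ⊥) :
    G.comap f ≠ ⊥ := by
  obtain ⟨a, b, hab⟩ := ne_bot_iff_exists_adj.1 h
  obtain ⟨u, rfl⟩ := hf a
  obtain ⟨v, rfl⟩ := hf b
  exact ne_bot_iff_exists_adj.2 ⟨u, v, hab⟩

lemma isMixedColouring_comap_iff (e : V ≃ W) (R B F : SimpleGraph W) {k : ℕ} (c : W → Fin k) :
    IsMixedColouring (R.comap e) (B.comap e) (F.comap e) (c ∘ e) ↔ IsMixedColouring R B F c := by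
  simp only [IsMixedColouring, comap_adj, sup_adj, comp_apply, e.surjective.forall]

lemma numColourings_comap (e : V ≃ W) (R B F : SimpleGraph W) (k : ℕ) :
    numColourings (R.comap e) (B.comap e) (F.comap e) k = numColourings R B F k :=
  Nat.card_congr ((e.arrowCongr (Equiv.refl (Fin k))).symm.subtypeEquiv fun c =>
    (isMixedColouring_comap_iff e R B F c).symm).symm

end Relabel

section Counting

open Finset

variable {X α β : Type*} [Fintype X] [DecidableEq X] [Fintype β]

theorem card_leafColourings (S : Finset X) (d : X) :
    Nat.card {l : β → X // ∀ j, l j ≠ d ∧ (d ∈ S → l j ∉ S)} =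
      (if d ∈ S then Fintype.card X - #S else Fintype.card X - 1) ^ Fintype.card β := by
  rw [Nat.card_congr (Equiv.subtypePiEquivPi (p := fun _ x => x ≠ d ∧ (d ∈ S → x ∉ S))),
    Nat.card_fun, Nat.card_eq_fintype_card, Nat.card_eq_fintype_card, Fintype.card_subtype]
  congr 1
  split_ifs with hd
  · rw [← card_compl]
    congr 1
    ext x
    simp only [mem_filter, mem_univ, true_and, mem_compl]
    exact ⟨fun h => h.2 hd, fun h => ⟨fun hx => h (hx ▸ hd), fun _ => h⟩⟩
  · rw [← card_singleton d, ← card_compl]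
    congr 1
    ext x
    simp [hd]

theorem card_centreLeafColourings (S : Finset X) :
    Nat.card {p : X × (β → X) // ∀ j, p.2 j ≠ p.1 ∧ (p.1 ∈ S → p.2 j ∉ S)} =
      #S * (Fintype.card X - #S) ^ Fintype.card β +
        (Fintype.card X - #S) * (Fintype.card X - 1) ^ Fintype.card β := by
  rw [Nat.card_congr (Equiv.subtypeProdEquivSigmaSubtype
      fun d (l : β → X) => ∀ j, l j ≠ d ∧ (d ∈ S → l j ∉ S)),
    Nat.card_sigma]
  simp only [card_leafColourings, apply_ite (· ^ Fintype.card β)]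
  rw [sum_ite, sum_const, sum_const, filter_mem_eq_inter, univ_inter, smul_eq_mul, smul_eq_mul,
    ← card_compl]
  congr 3
  ext
  simp

theorem card_filter_injective [Fintype α] [DecidableEq α] :
    #{f : α → X | Injective f} = (Fintype.card X).descFactorial (Fintype.card α) := by
  rw [← Fintype.card_subtype, Fintype.card_congr (Equiv.subtypeInjectiveEquivEmbedding α X),
    Fintype.card_embedding_eq]

theorem card_cliqueCentreLeafColourings [Fintype α] :
    Nat.card {q : (α → X) × X × (β → X) //
        Injective q.1 ∧ ∀ j, q.2.2 j ≠ q.2.1 ∧ (q.2.1 ∈ Set.range q.1 → q.2.2 j ∉ Set.range q.1)} =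
      (Fintype.card X).descFactorial (Fintype.card α) *
        (Fintype.card α * (Fintype.card X - Fintype.card α) ^ Fintype.card β +
          (Fintype.card X - Fintype.card α) * (Fintype.card X - 1) ^ Fintype.card β) := by
  classical
  rw [Nat.card_congr (Equiv.subtypeProdEquivSigmaSubtype fun (f : α → X) (p : X × (β → X)) =>
      Injective f ∧ ∀ j, p.2 j ≠ p.1 ∧ (p.1 ∈ Set.range f → p.2 j ∉ Set.range f)),
    Nat.card_sigma]
  have hfibre (f : α → X) : Nat.card {p : X × (β → X) //
      Injective f ∧ ∀ j, p.2 j ≠ p.1 ∧ (p.1 ∈ Set.range f → p.2 j ∉ Set.range f)} =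
      if Injective f then Fintype.card α * (Fintype.card X - Fintype.card α) ^ Fintype.card β +
          (Fintype.card X - Fintype.card α) * (Fintype.card X - 1) ^ Fintype.card β else 0 := by
    split_ifs with hf
    · simp only [hf, true_and]
      have := card_centreLeafColourings (β := β) (Set.range f).toFinset
      rw [Set.toFinset_range, card_image_of_injective _ hf, card_univ] at this
      simpa only [Set.toFinset_range, mem_image, mem_univ, true_and, Set.mem_range] using this
    · simp [hf]
  simp only [hfibre, sum_ite, sum_const_zero, add_zero, sum_const, smul_eq_mul,
    card_filter_injective]

end Counting

section CliqueStar

variable (α β : Type*)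

/-- The vertices `.inl i` carry a red clique; `.inr (.inl ())` is the centre of a blue star whose
leaves are the vertices `.inr (.inr j)`. -/
def cliqueStarRed : SimpleGraph (α ⊕ (Unit ⊕ β)) := disjUnion ⊤ ⊥

def cliqueStarBlue : SimpleGraph (α ⊕ (Unit ⊕ β)) := disjUnion ⊥ (crossGraph Unit β)

variable {α β}

lemma cliqueStarRed_adj {u v : α ⊕ (Unit ⊕ β)} :
    (cliqueStarRed α β).Adj u v ↔ ∃ i i', i ≠ i' ∧ u = .inl i ∧ v = .inl i' := by
  rcases u with u | _ | u <;> rcases v with v | _ | v <;>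
    simp [cliqueStarRed, _root_.disjUnion]

lemma cliqueStarBlue_adj {u v : α ⊕ (Unit ⊕ β)} :
    (cliqueStarBlue α β).Adj u v ↔
      ∃ j, (u = .inr (.inl ()) ∧ v = .inr (.inr j)) ∨ (u = .inr (.inr j) ∧ v = .inr (.inl ())) := by
  rcases u with u | _ | u <;> rcases v with v | _ | v <;>
    simp [cliqueStarBlue, _root_.disjUnion, crossGraph]

theorem isMixedColouring_cliqueStar_iff {k : ℕ} (c : α ⊕ (Unit ⊕ β) → Fin k) :
    IsMixedColouring (cliqueStarRed α β) (cliqueStarBlue α β) ⊥ c ↔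
      Injective (c ∘ .inl) ∧ ∀ j, c (.inr (.inr j)) ≠ c (.inr (.inl ())) ∧
        (c (.inr (.inl ())) ∈ Set.range (c ∘ .inl) →
          c (.inr (.inr j)) ∉ Set.range (c ∘ .inl)) := by
  constructor
  · rintro ⟨hproper, hbichromatic⟩
    have hleaf_ne (j : β) : c (.inr (.inr j)) ≠ c (.inr (.inl ())) :=
      hproper _ _ (.inl (.inr (cliqueStarBlue_adj.2 ⟨j, .inr ⟨rfl, rfl⟩⟩)))
    refine ⟨fun i i' h => ?_, fun j => ⟨hleaf_ne j, ?_⟩⟩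
    · by_contra hne
      exact hproper _ _ (.inl (.inl (cliqueStarRed_adj.2 ⟨i, i', hne, rfl, rfl⟩))) h
    · rintro ⟨i, hi⟩ ⟨i', hi'⟩
      by_cases hii' : i = i'
      · subst hii'
        exact hleaf_ne j (hi'.symm.trans hi)
      · exact hbichromatic _ _ _ _ (cliqueStarRed_adj.2 ⟨i, i', hii', rfl, rfl⟩)
          (cliqueStarBlue_adj.2 ⟨j, .inl ⟨rfl, rfl⟩⟩) hi hi'
  · rintro ⟨hinj, hleaf⟩
    refine ⟨fun u v huv => ?_, fun u x v y hR hB => ?_⟩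
    · simp only [sup_adj, bot_adj, or_false] at huv
      rcases huv with hR | hB
      · obtain ⟨i, i', hne, rfl, rfl⟩ := cliqueStarRed_adj.1 hR
        exact hinj.ne hne
      · obtain ⟨j, ⟨rfl, rfl⟩ | ⟨rfl, rfl⟩⟩ := cliqueStarBlue_adj.1 hB
        exacts [(hleaf j).1.symm, (hleaf j).1]
    · obtain ⟨i, i', -, rfl, rfl⟩ := cliqueStarRed_adj.1 hR
      obtain ⟨j, ⟨rfl, rfl⟩ | ⟨rfl, rfl⟩⟩ := cliqueStarBlue_adj.1 hB
      · exact fun hi hi' => (hleaf j).2 ⟨i, hi⟩ ⟨i', hi'⟩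
      · exact fun hi hi' => (hleaf j).2 ⟨i', hi'⟩ ⟨i, hi⟩

lemma disjoint_cliqueStarRed_cliqueStarBlue :
    Disjoint (cliqueStarRed α β) (cliqueStarBlue α β) := by
  refine disjoint_left.2 fun u v hR hB => ?_
  obtain ⟨i, i', -, rfl, rfl⟩ := cliqueStarRed_adj.1 hR
  simp [cliqueStarBlue_adj] at hB

lemma cliqueStarRed_ne_bot [Nontrivial α] : cliqueStarRed α β ≠ ⊥ := by
  obtain ⟨i, i', hne⟩ := exists_pair_ne α
  exact ne_bot_iff_exists_adj.2 ⟨_, _, cliqueStarRed_adj.2 ⟨i, i', hne, rfl, rfl⟩⟩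

lemma cliqueStarBlue_ne_bot [Nonempty β] : cliqueStarBlue α β ≠ ⊥ :=
  ne_bot_iff_exists_adj.2 ⟨_, _, cliqueStarBlue_adj.2 ⟨Classical.arbitrary β, .inl ⟨rfl, rfl⟩⟩⟩

theorem numColourings_cliqueStar [Fintype α] [Fintype β] (k : ℕ) :
    numColourings (cliqueStarRed α β) (cliqueStarBlue α β) ⊥ k =
      k.descFactorial (Fintype.card α) *
        (Fintype.card α * (k - Fintype.card α) ^ Fintype.card β +
          (k - Fintype.card α) * (k - 1) ^ Fintype.card β) := by
  have hcount := card_cliqueCentreLeafColourings (X := Fin k) (α := α) (β := β)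
  rw [Fintype.card_fin] at hcount
  rw [numColourings, ← hcount]
  refine Nat.card_congr (Equiv.subtypeEquiv ((Equiv.sumArrowEquivProdArrow _ _ _).trans
    ((Equiv.refl _).prodCongr ((Equiv.sumArrowEquivProdArrow _ _ _).trans
      ((Equiv.punitArrowEquiv _).prodCongr (Equiv.refl _))))) fun c => ?_)
  exact isMixedColouring_cliqueStar_iff c

end CliqueStar

noncomputable def cliqueStarPoly (a m : ℕ) : ℚ[X] :=
  descPochhammer ℚ a * (C (a : ℚ) * (X - C (a : ℚ)) ^ m + (X - C (a : ℚ)) * (X - 1) ^ m)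

lemma cliqueStarPoly_eval_natCast (a m k : ℕ) :
    (cliqueStarPoly a m).eval (k : ℚ) =
      (k.descFactorial a * (a * (k - a) ^ m + (k - a) * (k - 1) ^ m) : ℕ) := by
  simp only [cliqueStarPoly, eval_mul, descPochhammer_eval_eq_descFactorial, eval_add, eval_pow,
    eval_sub, eval_C, eval_X, eval_one]
  rcases lt_or_ge k a with hka | hak
  · simp [Nat.descFactorial_eq_zero_iff_lt.2 hka]
  rcases Nat.eq_zero_or_pos k with rfl | hk
  · obtain rfl : a = 0 := Nat.le_zero.1 hak
    simp
  push_cast [Nat.cast_sub hak, Nat.cast_sub hk]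
  ring

lemma aeval_cliqueStarPoly_eq_zero {a : ℕ} {z : ℂ} (hz : (z - 1) ^ 3 + a * (z - a) ^ 2 = 0) :
    aeval z (cliqueStarPoly a 3) = 0 := by
  simp only [cliqueStarPoly, map_mul, map_add, map_pow, map_sub, aeval_C, aeval_X, map_one,
    eq_ratCast, Rat.cast_natCast]
  rw [show (a : ℂ) * (z - a) ^ 3 + (z - a) * (z - 1) ^ 3 = 0 by linear_combination (z - a) * hz,
    mul_zero]

/-- Non-real roots of chromatic polynomials of bichromatic 2-edge-coloured graphs can
have arbitrarily large modulus. -/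
theorem bichromatic_nonreal_roots_unbounded (M : ℝ) :
    ∃ (n : ℕ) (R B : SimpleGraph (Fin n)) (P : Polynomial ℚ) (z : ℂ),
      Disjoint R B ∧ R ≠ ⊥ ∧ B ≠ ⊥ ∧
      (∀ k : ℕ, P.eval (k : ℚ) = numColourings R B ⊥ k) ∧
      z.im ≠ 0 ∧ M < ‖z‖ ∧ Polynomial.aeval z P = 0 := by
  obtain ⟨a, ha⟩ := exists_nat_gt (max (2 * M) 2)
  have ha2 : 2 < a := by exact_mod_cast (le_max_right _ _).trans_lt ha
  have : Nontrivial (Fin a) := Fin.nontrivial_iff_two_le.2 ha2.le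
  obtain ⟨z, hz, hzim, hzre⟩ :=
    exists_nonreal_root_re_gt a (by exact_mod_cast ha2.trans' one_lt_two)
  let e := (Fintype.equivFin (Fin a ⊕ (Unit ⊕ Fin 3))).symm
  refine ⟨_, (cliqueStarRed (Fin a) (Fin 3)).comap e, (cliqueStarBlue (Fin a) (Fin 3)).comap e,
    cliqueStarPoly a 3, z, disjoint_comap disjoint_cliqueStarRed_cliqueStarBlue,
    comap_ne_bot e.surjective cliqueStarRed_ne_bot, comap_ne_bot e.surjective cliqueStarBlue_ne_bot,
    fun k => ?_, hzim, ?_, aeval_cliqueStarPoly_eq_zero (by exact_mod_cast hz)⟩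
  · rw [show (⊥ : SimpleGraph _) = (⊥ : SimpleGraph _).comap e from rfl, numColourings_comap,
      numColourings_cliqueStar, cliqueStarPoly_eval_natCast]
    simp
  · have h2M : 2 * M < a := (le_max_left _ _).trans_lt ha
    linarith [z.re_le_norm]
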